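/- arXiv:1106.4912 — 4 statements merged into one kernel-verified Lean document; each statement's English description precedes it below -/
import Mathlib

section
/- Let R be a commutative ring and x, y ∈ R such that the ideal generated by x and y is the whole ring R. Let ρ be a unit of R and N ∈ ℕ. Then the ideal generated by x + ρ·y^N and x·y^N is the whole ring R. -/
/-!
Modulo `x` the element `x + ρ * y ^ N` is `ρ * y ^ N`, and modulo `y ^ N` it is `x`; both are
coprime to the respective modulus, so `x + ρ * y ^ N` is coprime to each factor of `x * y ^ N`.
-/

theorem Ideal.span_pair_eq_top_iff_isCoprime {R : Type*} [CommSemiring R] (x y : R) :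
    Ideal.span ({x, y} : Set R) = ⊤ ↔ IsCoprime x y := by
  rw [Ideal.span_insert, Ideal.sup_eq_top_iff_isCoprime]

theorem IsCoprime.add_mul_pow_of_isUnit {R : Type*} [CommRing R] {x y u : R} (h : IsCoprime x y)
    (hu : IsUnit u) (N : ℕ) : IsCoprime (x + u * y ^ N) (x * y ^ N) := by
  have coprime_x : IsCoprime (u * y ^ N) x :=
    (isCoprime_mul_unit_left_left hu _ _).2 h.symm.pow_left
  have coprime_pow : IsCoprime x (y ^ N) := h.pow_right
  refine IsCoprime.mul_right ?_ ?_
  · simpa [add_comm] using coprime_x.add_mul_left_left 1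
  · exact IsCoprime.add_mul_right_left_iff.2 coprime_pow

/-- Let `R` be a commutative ring and `x, y ∈ R` generating the unit ideal. Let `ρ` be a
unit of `R` and `N ∈ ℕ`. Then `x + ρ * y ^ N` and `x * y ^ N` generate the unit ideal. -/
theorem stmt_3 (R : Type*) [CommRing R] (x y : R)
    (h : Ideal.span ({x, y} : Set R) = ⊤) (ρ : Rˣ) (N : ℕ) :
    Ideal.span ({x + (ρ : R) * y ^ N, x * y ^ N} : Set R) = ⊤ := by
  rw [Ideal.span_pair_eq_top_iff_isCoprime] at h ⊢
  exact h.add_mul_pow_of_isUnit ρ.isUnit N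
end

section
/- Let K be a p-adic field with fixed uniformizer π, and let γ ∈ K^* be such that the diagonal quadratic form ⟨1, π, −γ, −π·γ⟩ is anisotropic over K. Let f ∈ K(t)^* be such that v_t(f) is odd. Then at least one of the two diagonal quadratic forms ⟨1, −γ, −t, −f, π, −π·γ, −π·t, −π·f⟩ and ⟨1, −γ, −t, −γ·f, π, −π·γ, −π·t, −π·γ·f⟩ is anisotropic over K(t). -/
/-- The diagonal quadratic form `⟨q 0, …, q (n-1)⟩` is isotropic over `F`:
there is a nonzero vector on which it vanishes. -/
def IsIsotropic {F : Type*} [CommRing F] {n : ℕ} (q : Fin n → F) : Prop :=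
  ∃ x : Fin n → F, x ≠ 0 ∧ ∑ i, q i * x i ^ 2 = 0

/-- The diagonal form `⟨1, a⟩ ⊗ ⟨1, b, c, d⟩ = ⟨1, b, c, d, a, a·b, a·c, a·d⟩`. -/
def form8 {F : Type*} [CommRing F] (a b c d : F) : Fin 8 → F :=
  ![1, b, c, d, a, a * b, a * c, a * d]

/-- The `t`-adic valuation on `K(t)` (order of vanishing at `t = 0`). -/
noncomputable def vt {K : Type*} [Field K] (f : RatFunc K) : ℤ :=
  (Polynomial.rootMultiplicity 0 f.num : ℤ) - (Polynomial.rootMultiplicity 0 f.denom : ℤ)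

/-!
Suppose both forms are isotropic. Since `v_t(f)` is odd, `f = t·G·r²` with `G(0) ≠ 0`, so after
rescaling and clearing denominators `⟨1, π⟩ ⊗ ⟨1, -γ, -t, -e·t·G⟩` (for `e = 1` and `e = γ`) is
isotropic over `K[t]`. That form is `q₀ ⊥ -t·q₁` with `q₀ = ⟨1, π, -γ, -πγ⟩` and
`q₁ = ⟨1, π, eG, πeG⟩`. An anisotropic residue form forces the `t`-adic order of a value to be
even, so the two halves cannot cancel unless `q₁(0) = ⟨1, π, e·G(0), π·e·G(0)⟩` is isotropic over
`K` (Springer's argument). Isotropy of `⟨1, π⟩ ⊗ ⟨1, c⟩` makes `-c` a norm from `K(√-π)`; applying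
this to `c = G(0)` and `c = γ·G(0)` makes `γ` a norm, i.e. `⟨1, π, -γ, -πγ⟩` isotropic.
-/

open Polynomial

section Norms

variable {F : Type*} [Field F]

/-- `x` is represented by `⟨1, π⟩`, i.e. `x` is a norm from `F(√-π)`. -/
def IsNorm (π x : F) : Prop :=
  ∃ u v : F, u ^ 2 + π * v ^ 2 = x

lemma isNorm_sq (π x : F) : IsNorm π (x ^ 2) :=
  ⟨x, 0, by ring⟩

lemma IsNorm.mul {π x y : F} (hx : IsNorm π x) (hy : IsNorm π y) : IsNorm π (x * y) := by
  obtain ⟨u, v, rfl⟩ := hx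
  obtain ⟨u', v', rfl⟩ := hy
  exact ⟨u * u' - π * v * v', u * v' + v * u', by ring⟩

lemma IsNorm.div {π x y : F} (hx : IsNorm π x) (hy : IsNorm π y) : IsNorm π (x / y) := by
  have hxy := (hx.mul hy).mul (isNorm_sq π y⁻¹)
  rcases eq_or_ne y 0 with rfl | hy0
  · simpa using hxy
  · convert hxy using 1
    field_simp

lemma not_isIsotropic_pair_of_not_isIsotropic {π γ : F}
    (h : ¬IsIsotropic ![(1 : F), π, -γ, -(π * γ)]) : ¬IsIsotropic ![(1 : F), π] := by
  rintro ⟨x, hx, hsum⟩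
  refine h ⟨![x 0, x 1, 0, 0], fun h0 => hx ?_, ?_⟩
  · ext i
    fin_cases i
    exacts [congrFun h0 0, congrFun h0 1]
  · simpa [Fin.sum_univ_four, Fin.sum_univ_two] using hsum

lemma sq_add_mul_sq_ne_zero {π u v : F} (hπ : ¬IsIsotropic ![(1 : F), π])
    (huv : u ≠ 0 ∨ v ≠ 0) : u ^ 2 + π * v ^ 2 ≠ 0 := by
  refine fun h => hπ ⟨![u, v], fun h0 => ?_, by simpa [Fin.sum_univ_two] using h⟩
  rcases huv with hu | hv
  exacts [hu (congrFun h0 0), hv (congrFun h0 1)]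

lemma isNorm_neg_of_isIsotropic {π c : F} (hπ : ¬IsIsotropic ![(1 : F), π])
    (h : IsIsotropic ![(1 : F), π, c, π * c]) : IsNorm π (-c) := by
  obtain ⟨x, hx, hsum⟩ := h
  simp only [Fin.sum_univ_four, Matrix.cons_val_zero, Matrix.cons_val_one, Matrix.cons_val,
    one_mul] at hsum
  by_cases h23 : x 2 ≠ 0 ∨ x 3 ≠ 0
  · have hN := sq_add_mul_sq_ne_zero hπ h23
    convert IsNorm.div (π := π) ⟨x 0, x 1, rfl⟩ ⟨x 2, x 3, rfl⟩ using 1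
    field_simp
    linear_combination -hsum
  · push Not at h23
    have h01 : x 0 ≠ 0 ∨ x 1 ≠ 0 := by
      by_contra! h01
      exact hx (by ext i; fin_cases i <;> simp [h01, h23])
    exact (sq_add_mul_sq_ne_zero hπ h01 (by simpa [h23] using hsum)).elim

lemma isIsotropic_of_isNorm {π γ : F} (h : IsNorm π γ) :
    IsIsotropic ![(1 : F), π, -γ, -(π * γ)] := by
  obtain ⟨u, v, rfl⟩ := h
  refine ⟨![u, v, 1, 0], fun h0 => one_ne_zero (congrFun h0 2), ?_⟩
  simp [Fin.sum_univ_four]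

lemma isIsotropic_of_isIsotropic_of_isIsotropic_mul {π γ c : F} (hc : c ≠ 0)
    (h₁ : IsIsotropic ![(1 : F), π, c, π * c])
    (h₂ : IsIsotropic ![(1 : F), π, γ * c, π * (γ * c)]) :
    IsIsotropic ![(1 : F), π, -γ, -(π * γ)] := by
  by_contra hA
  have hπ := not_isIsotropic_pair_of_not_isIsotropic hA
  have hγ := (isNorm_neg_of_isIsotropic hπ h₂).div (isNorm_neg_of_isIsotropic hπ h₁)
  rw [neg_div_neg_eq, mul_div_cancel_right₀ γ hc] at hγ
  exact hA (isIsotropic_of_isNorm hγ)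

end Norms

section Springer

variable {K : Type*} [Field K] {m n : ℕ}

lemma natTrailingDegree_X_pow_mul_of_coeff_zero_ne_zero {S : K[X]} (hS : S.coeff 0 ≠ 0)
    (k : ℕ) : (X ^ k * S).natTrailingDegree = k := by
  have hS0 : S ≠ 0 := fun h => hS (by simp [h])
  rw [mul_comm, natTrailingDegree_mul_X_pow hS0, natTrailingDegree_eq_zero.2 (Or.inr hS), zero_add]

lemma exists_sum_mul_sq_eq_X_pow_mul (q : Fin n → K[X])
    (hq : ¬IsIsotropic fun i => (q i).coeff 0) {y : Fin n → K[X]} (hy : y ≠ 0) :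
    ∃ (m : ℕ) (S : K[X]), S.coeff 0 ≠ 0 ∧ ∑ i, q i * y i ^ 2 = X ^ (2 * m) * S := by
  classical
  -- Factor out `X ^ m`, with `m` the least order at `0` among the `y i`: the constant term of
  -- the cofactor is then the residue form evaluated at a nonzero vector.
  obtain ⟨i, hi⟩ := Function.ne_iff.mp hy
  obtain ⟨i₀, hi₀, hmin⟩ := (Finset.univ.filter (y · ≠ 0)).exists_min_image
    (fun i => (y i).natTrailingDegree) ⟨i, by simpa using hi⟩
  have hdvd : ∀ i, X ^ (y i₀).natTrailingDegree ∣ y i := fun i => by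
    by_cases h : y i = 0
    · simp [h]
    exact X_pow_dvd_iff.2 fun d hd =>
      coeff_eq_zero_of_lt_natTrailingDegree (hd.trans_le (hmin i (by simpa using h)))
  choose w hw using hdvd
  refine ⟨(y i₀).natTrailingDegree, ∑ i, q i * w i ^ 2,
    fun h => hq ⟨fun i => (w i).coeff 0, ?_, ?_⟩, ?_⟩
  · refine Function.ne_iff.mpr ⟨i₀, ?_⟩
    have hcoeff := coeff_X_pow_mul (w i₀) (y i₀).natTrailingDegree 0
    rw [zero_add, ← hw i₀] at hcoeff
    simpa [← hcoeff] using hi₀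
  · simpa [finsetSum_coeff, mul_coeff_zero, pow_two] using h
  · rw [Finset.mul_sum]
    refine Finset.sum_congr rfl fun i _ => ?_
    rw [hw i]
    ring

lemma sum_mul_sq_ne_zero (q : Fin n → K[X]) (hq : ¬IsIsotropic fun i => (q i).coeff 0)
    {y : Fin n → K[X]} (hy : y ≠ 0) : ∑ i, q i * y i ^ 2 ≠ 0 := by
  obtain ⟨m, S, hS, h⟩ := exists_sum_mul_sq_eq_X_pow_mul q hq hy
  rw [h]
  exact mul_ne_zero (pow_ne_zero _ X_ne_zero) (by rintro rfl; exact hS (coeff_zero 0))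

theorem eq_zero_of_sum_mul_sq_eq_X_mul_sum_mul_sq {q : Fin m → K[X]} {r : Fin n → K[X]}
    (hq : ¬IsIsotropic fun i => (q i).coeff 0) (hr : ¬IsIsotropic fun i => (r i).coeff 0)
    {y : Fin m → K[X]} {z : Fin n → K[X]}
    (h : ∑ i, q i * y i ^ 2 = X * ∑ i, r i * z i ^ 2) : y = 0 ∧ z = 0 := by
  rcases eq_or_ne y 0 with hy | hy
  · refine ⟨hy, by_contra fun hz => sum_mul_sq_ne_zero r hr hz ?_⟩
    simpa [hy, X_ne_zero] using h.symm
  have hz : z ≠ 0 := by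
    rintro rfl
    exact sum_mul_sq_ne_zero q hq hy (by simpa using h)
  obtain ⟨k, S, hS, hSq⟩ := exists_sum_mul_sq_eq_X_pow_mul q hq hy
  obtain ⟨l, T, hT, hTr⟩ := exists_sum_mul_sq_eq_X_pow_mul r hr hz
  rw [hSq, hTr, ← mul_assoc, ← pow_succ'] at h
  have hdeg := congrArg natTrailingDegree h
  rw [natTrailingDegree_X_pow_mul_of_coeff_zero_ne_zero hS,
    natTrailingDegree_X_pow_mul_of_coeff_zero_ne_zero hT] at hdeg
  omega

end Springer

section Isotropy

variable {n : ℕ}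

lemma IsIsotropic.of_mul_sq {F : Type*} [CommRing F] [NoZeroDivisors F] {q c : Fin n → F}
    (hc : ∀ i, c i ≠ 0) (h : IsIsotropic fun i => c i ^ 2 * q i) : IsIsotropic q := by
  obtain ⟨x, hx, hsum⟩ := h
  obtain ⟨i, hi⟩ := Function.ne_iff.mp hx
  refine ⟨fun i => c i * x i, Function.ne_iff.mpr ⟨i, mul_ne_zero (hc i) hi⟩, ?_⟩
  rw [← hsum]
  exact Finset.sum_congr rfl fun i _ => by ring

lemma IsIsotropic.of_algebraMap {R F : Type*} [CommRing R] [IsDomain R] [Field F] [Algebra R F]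
    [IsFractionRing R F] {q : Fin n → R} (h : IsIsotropic fun i => algebraMap R F (q i)) :
    IsIsotropic q := by
  obtain ⟨x, hx, hsum⟩ := h
  obtain ⟨b, hb⟩ := IsLocalization.exist_integer_multiples_of_finite (nonZeroDivisors R) x
  choose z hz using hb
  have hb0 : algebraMap R F b ≠ 0 :=
    IsFractionRing.to_map_ne_zero_of_mem_nonZeroDivisors b.2
  obtain ⟨i, hi⟩ := Function.ne_iff.mp hx
  refine ⟨z, Function.ne_iff.mpr ⟨i, fun h0 => ?_⟩, IsFractionRing.injective R F ?_⟩
  · exact mul_ne_zero hb0 hi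
      (by rw [← Algebra.smul_def, ← hz i, show z i = 0 from h0, map_zero])
  · simp only [map_sum, map_mul, map_pow, hz, Algebra.smul_def, map_zero]
    rw [← mul_zero (algebraMap R F b ^ 2), ← hsum, Finset.mul_sum]
    exact Finset.sum_congr rfl fun i _ => by ring

end Isotropy

section Form8

variable {F : Type*} [CommRing F]

lemma form8_map {S : Type*} [CommRing S] (φ : F →+* S) (a b c d : F) :
    form8 (φ a) (φ b) (φ c) (φ d) = fun i => φ (form8 a b c d i) := by
  ext i
  fin_cases i <;> simp [form8]

lemma IsIsotropic.form8_of_mul_sq [IsDomain F] {a b c d s : F} (hs : s ≠ 0)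
    (h : IsIsotropic (form8 a b c (s ^ 2 * d))) : IsIsotropic (form8 a b c d) := by
  refine IsIsotropic.of_mul_sq (c := ![1, 1, 1, s, 1, 1, 1, s]) (fun i => ?_) ?_
  · fin_cases i <;> simp [hs]
  · convert h using 1
    ext i
    fin_cases i <;> simp [form8, mul_left_comm]

end Form8

section Residue

variable {K : Type*} [Field K]

lemma isIsotropic_residue_of_isIsotropic_form8 {π γ : K}
    (hA : ¬IsIsotropic ![(1 : K), π, -γ, -(π * γ)]) (H : K[X])
    (h : IsIsotropic (form8 (C π) (-C γ) (-X) (-(X * H)))) :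
    IsIsotropic ![(1 : K), π, H.coeff 0, π * H.coeff 0] := by
  by_contra hB
  obtain ⟨z, hz, hsum⟩ := h
  have hzero := eq_zero_of_sum_mul_sq_eq_X_mul_sum_mul_sq
    (q := ![1, C π, -C γ, -(C π * C γ)]) (r := ![1, C π, H, C π * H])
    (y := ![z 0, z 4, z 1, z 5]) (z := ![z 2, z 6, z 3, z 7])
    (by convert hA using 2; ext i; fin_cases i <;> simp)
    (by convert hB using 2; ext i; fin_cases i <;> simp [mul_coeff_zero])
    (by
      simp only [form8, Fin.sum_univ_eight, Fin.sum_univ_four, Matrix.cons_val_zero,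
        Matrix.cons_val_one, Matrix.cons_val] at hsum ⊢
      linear_combination hsum)
  obtain ⟨⟨h₀, h₄, h₁, h₅, -⟩, h₂, h₆, h₃, h₇, -⟩ := by
    simpa only [Matrix.cons_eq_zero_iff] using hzero
  apply hz
  funext i
  fin_cases i <;> assumption

end Residue

section RatFunc

variable {K : Type*} [Field K]

lemma exists_eq_X_mul_mul_sq_of_odd_vt {f : RatFunc K} (hf : f ≠ 0) (hodd : Odd (vt f)) :
    ∃ (G : K[X]) (r : RatFunc K), G.coeff 0 ≠ 0 ∧ r ≠ 0 ∧
      f = algebraMap K[X] (RatFunc K) (X * G) * r ^ 2 := by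
  set φ := algebraMap K[X] (RatFunc K)
  have hND : f.num * f.denom ≠ 0 := mul_ne_zero (RatFunc.num_ne_zero hf) (RatFunc.denom_ne_zero f)
  obtain ⟨G, hG, hGX⟩ := exists_eq_pow_rootMultiplicity_mul_and_not_dvd _ hND 0
  obtain ⟨k, hk⟩ : ∃ k, (f.num * f.denom).rootMultiplicity 0 = 2 * k + 1 := by
    obtain ⟨c, hc⟩ := hodd
    rw [rootMultiplicity_mul hND]
    exact ⟨(c + f.denom.rootMultiplicity 0).toNat, by unfold vt at hc; omega⟩
  rw [map_zero, sub_zero] at hG hGX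
  rw [hk] at hG
  have hD : φ f.denom ≠ 0 := RatFunc.algebraMap_ne_zero (RatFunc.denom_ne_zero f)
  have hnum : f * φ f.denom = φ f.num := (eq_div_iff hD).mp (RatFunc.num_div_denom f).symm
  have hG' := congrArg φ hG
  simp only [map_mul, map_pow] at hG' ⊢
  refine ⟨G, φ X ^ k / φ f.denom, X_dvd_iff.not.mp hGX,
    div_ne_zero (pow_ne_zero _ (RatFunc.algebraMap_ne_zero X_ne_zero)) hD, ?_⟩
  field_simp
  linear_combination φ f.denom * hnum + hG'

lemma isIsotropic_residue_of_isIsotropic_form8_ratFunc {π γ : K}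
    (hA : ¬IsIsotropic ![(1 : K), π, -γ, -(π * γ)]) {G : K[X]} {r : RatFunc K} (hr : r ≠ 0)
    (e : K)
    (h : IsIsotropic (form8 (algebraMap K (RatFunc K) π) (-(algebraMap K (RatFunc K) γ))
      (-RatFunc.X)
      (-(algebraMap K (RatFunc K) e * (algebraMap K[X] (RatFunc K) (X * G) * r ^ 2))))) :
    IsIsotropic ![(1 : K), π, e * G.coeff 0, π * (e * G.coeff 0)] := by
  have h' : IsIsotropic (form8 (algebraMap K[X] (RatFunc K) (C π))
      (algebraMap K[X] (RatFunc K) (-C γ)) (algebraMap K[X] (RatFunc K) (-X))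
      (algebraMap K[X] (RatFunc K) (-(X * (C e * G))))) := by
    refine IsIsotropic.form8_of_mul_sq hr ?_
    convert h using 2 <;>
      simp only [map_neg, map_mul, RatFunc.algebraMap_C, RatFunc.algebraMap_X,
        RatFunc.algebraMap_eq_C]
    ring
  rw [form8_map] at h'
  simpa [coeff_C_mul] using isIsotropic_residue_of_isIsotropic_form8 hA _ h'.of_algebraMap

end RatFunc

theorem stmt_10_general (K : Type*) [Field K]
    (π : K) (γ : K)
    (haniso : ¬ IsIsotropic ![(1 : K), π, -γ, -(π * γ)])
    (f : RatFunc K) (hf : f ≠ 0) (hodd : Odd (vt f)) :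
    ¬ IsIsotropic (form8 (algebraMap K (RatFunc K) π) (-(algebraMap K (RatFunc K) γ))
        (-RatFunc.X) (-f)) ∨
      ¬ IsIsotropic (form8 (algebraMap K (RatFunc K) π) (-(algebraMap K (RatFunc K) γ))
        (-RatFunc.X) (-(algebraMap K (RatFunc K) γ * f))) := by
  by_contra! h
  obtain ⟨G, r, hG, hr, rfl⟩ := exists_eq_X_mul_mul_sq_of_odd_vt hf hodd
  have h₁ := isIsotropic_residue_of_isIsotropic_form8_ratFunc haniso hr 1 (by simpa using h.1)
  have h₂ := isIsotropic_residue_of_isIsotropic_form8_ratFunc haniso hr γ h.2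
  rw [one_mul] at h₁
  exact haniso (isIsotropic_of_isIsotropic_of_isIsotropic_mul hG h₁ h₂)

/-- Theorem `oneoftwoanisotropic`: let `K` be a p-adic field with uniformizer `π` and
`γ ∈ K^*` with `⟨1, π, -γ, -π·γ⟩` anisotropic over `K`. If `f ∈ K(t)^*` has odd `t`-adic
valuation, then at least one of `⟨1,π⟩⊗⟨1,-γ,-t,-f⟩` and `⟨1,π⟩⊗⟨1,-γ,-t,-γ·f⟩` is
anisotropic over `K(t)`. -/
theorem stmt_10 (p : ℕ) [Fact p.Prime]
    (K : Type*) [Field K] [Algebra ℚ_[p] K] [FiniteDimensional ℚ_[p] K]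
    (v : K → ℤ)
    (hv_mul : ∀ x y : K, x ≠ 0 → y ≠ 0 → v (x * y) = v x + v y)
    (hv_add : ∀ x y : K, x ≠ 0 → y ≠ 0 → x + y ≠ 0 → min (v x) (v y) ≤ v (x + y))
    (hv_int : ∀ z : ℤ_[p], z ≠ 0 → 0 ≤ v (algebraMap ℚ_[p] K (z : ℚ_[p])))
    (π : K) (hπ0 : π ≠ 0) (hπ1 : v π = 1)
    (γ : K) (hγ : γ ≠ 0)
    (haniso : ¬ IsIsotropic ![(1 : K), π, -γ, -(π * γ)])
    (f : RatFunc K) (hf : f ≠ 0) (hodd : Odd (vt f)) :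
    ¬ IsIsotropic (form8 (algebraMap K (RatFunc K) π) (-(algebraMap K (RatFunc K) γ))
        (-RatFunc.X) (-f)) ∨
      ¬ IsIsotropic (form8 (algebraMap K (RatFunc K) π) (-(algebraMap K (RatFunc K) γ))
        (-RatFunc.X) (-(algebraMap K (RatFunc K) γ * f))) :=
  stmt_10_general K π γ haniso f hf hodd
end

section
/- Let K be a p-adic field and let x, y ∈ K(t) satisfy y² = x³ − x. Then x and y are constant, i.e. x ∈ K and y ∈ K (under the natural embedding of K into K(t)). -/
/-!
Write `x = A / C` and `y = B / E` in lowest terms with `C`, `E` monic. Clearing denominators in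
`y² = x³ - x` forces `E² = C³`, so `C = D²` is a square, and `B² = A (A² - D⁴)` with `A`, `D`
coprime. As `A` and `A² - D⁴` are coprime, each is a constant times a square, `A = u α²` and
`A² - D⁴ = v β²`, so that `u² α⁴ - D⁴ - v β² = 0`. This is a Fermat–Catalan equation of signature
`(4, 4, 2)`, and `1/4 + 1/4 + 1/2 ≤ 1`, so by Mason–Stothers it has only constant solutions in
characteristic zero.
-/

open Polynomial

theorem exists_eq_sq_of_sq_eq_pow_three {R : Type*} [CommRing R] [IsDomain R]
    [IsIntegrallyClosed R] {c e : R} (h : e ^ 2 = c ^ 3) : ∃ d, c = d ^ 2 := by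
  rcases eq_or_ne c 0 with rfl | hc
  · exact ⟨0, by ring⟩
  obtain ⟨d, rfl⟩ : c ∣ e :=
    (IsIntegrallyClosed.pow_dvd_pow_iff two_ne_zero).mp ⟨c, by rw [h]; ring⟩
  refine ⟨d, mul_left_cancel₀ (pow_ne_zero 2 hc) ?_⟩
  linear_combination -h

namespace Polynomial

variable {K : Type*} [Field K]

theorem exists_C_mul_pow_of_mul_eq_pow {a b c : K[X]} (hab : IsCoprime a b) {k : ℕ}
    (h : a * b = c ^ k) : ∃ u d, u ≠ 0 ∧ a = C u * d ^ k := by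
  obtain ⟨d, v, rfl⟩ := exists_associated_pow_of_mul_eq_pow' hab h
  obtain ⟨u, hu, hv⟩ := isUnit_iff.mp v.isUnit
  exact ⟨u, d, hu.ne_zero, by rw [hv, mul_comm]⟩

theorem natDegree_eq_zero_of_sq_eq_mul_sq_sub_pow_four [CharZero K] {A D B : K[X]}
    (hAD : IsCoprime A D) (h : B ^ 2 = A * (A ^ 2 - D ^ 4)) :
    A.natDegree = 0 ∧ D.natDegree = 0 ∧ B.natDegree = 0 := by
  suffices hAD0 : A.natDegree = 0 ∧ D.natDegree = 0 by
    obtain ⟨a, rfl⟩ := natDegree_eq_zero.mp hAD0.1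
    obtain ⟨d, rfl⟩ := natDegree_eq_zero.mp hAD0.2
    refine ⟨natDegree_C a, natDegree_C d, ?_⟩
    have hB2 : (B ^ 2).natDegree = 0 := by
      rw [h, ← C_pow, ← C_pow, ← C_sub, ← C_mul, natDegree_C]
    rw [natDegree_pow] at hB2
    omega
  by_cases hA0 : A = 0
  · exact ⟨by simp [hA0], natDegree_eq_zero_of_isUnit (isCoprime_zero_left.mp (hA0 ▸ hAD))⟩
  by_cases hD0 : D = 0
  · exact ⟨natDegree_eq_zero_of_isUnit (isCoprime_zero_right.mp (hD0 ▸ hAD)), by simp [hD0]⟩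
  by_cases hS0 : A ^ 2 - D ^ 4 = 0
  · have hsq : A ^ 2 = D ^ 4 := sub_eq_zero.mp hS0
    exact ⟨natDegree_eq_zero_of_isUnit
        (hAD.pow_right.isUnit_of_dvd' dvd_rfl ⟨A, by rw [← hsq, sq]⟩),
      natDegree_eq_zero_of_isUnit
        (hAD.pow_left.isUnit_of_dvd' ⟨D ^ 3, by rw [hsq]; ring⟩ dvd_rfl)⟩
  have hAS : IsCoprime A (A ^ 2 - D ^ 4) := by
    have h' := (hAD.pow_right (n := 4)).neg_right.add_mul_left_right A
    rwa [neg_add_eq_sub, ← sq] at h'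
  obtain ⟨u, α, hu, hA⟩ := exists_C_mul_pow_of_mul_eq_pow hAS h.symm
  obtain ⟨v, β, hv, hS⟩ := exists_C_mul_pow_of_mul_eq_pow hAS.symm (by rw [mul_comm, h])
  have hα : α ≠ 0 := by rintro rfl; simp [hA] at hA0
  have hβ : β ≠ 0 := by rintro rfl; simp [hS] at hS0
  have hαD : IsCoprime α D :=
    (hA ▸ hAD).of_mul_left_right.of_isCoprime_of_dvd_left (dvd_pow_self α two_ne_zero)
  have heq : C (u ^ 2) * α ^ 4 + C (-1) * D ^ 4 + C (-v) * β ^ 2 = 0 := by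
    rw [map_pow, map_neg, map_neg, map_one]
    linear_combination hS - (A + C u * α ^ 2) * hA
  obtain ⟨hα0, hD0, -⟩ := flt_catalan (p := 4) (q := 4) (r := 2) (by norm_num) (by norm_num)
    (by norm_num) (by norm_num) (by norm_num) (by norm_num) (by norm_num) hα hD0 hβ hαD
    (pow_ne_zero 2 hu) (by norm_num) (neg_ne_zero.mpr hv) heq
  refine ⟨?_, hD0⟩
  rw [hA, natDegree_C_mul hu, natDegree_pow, hα0]

end Polynomial

namespace RatFunc

variable {K : Type*} [Field K]

theorem exists_eq_algebraMap_of_natDegree_eq_zero {x : RatFunc K} (hnum : x.num.natDegree = 0)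
    (hdenom : x.denom.natDegree = 0) : ∃ a : K, x = algebraMap K (RatFunc K) a := by
  obtain ⟨a, ha⟩ := natDegree_eq_zero.mp hnum
  refine ⟨a, ?_⟩
  rw [← num_div_denom x, x.monic_denom.natDegree_eq_zero.mp hdenom, ← ha, map_one, div_one,
    algebraMap_C, algebraMap_eq_C]

theorem num_sq_mul_denom_pow_three_of_sq_eq_cubic {x y : RatFunc K} {a b : K}
    (h : y ^ 2 = x ^ 3 + algebraMap K (RatFunc K) a * x + algebraMap K (RatFunc K) b) :
    y.num ^ 2 * x.denom ^ 3 = (x.num ^ 3 + Polynomial.C a * x.num * x.denom ^ 2 +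
      Polynomial.C b * x.denom ^ 3) * y.denom ^ 2 := by
  have hxd := algebraMap_ne_zero x.denom_ne_zero
  have hyd := algebraMap_ne_zero y.denom_ne_zero
  apply algebraMap_injective K
  simp only [map_mul, map_add, map_pow, algebraMap_C, ← algebraMap_eq_C]
  rw [← num_div_denom x, ← num_div_denom y] at h
  field_simp at h
  linear_combination h

theorem denom_sq_eq_denom_pow_three_of_sq_eq_cubic {x y : RatFunc K} {a b : K}
    (h : y ^ 2 = x ^ 3 + algebraMap K (RatFunc K) a * x + algebraMap K (RatFunc K) b) :
    y.denom ^ 2 = x.denom ^ 3 := by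
  have key := num_sq_mul_denom_pow_three_of_sq_eq_cubic h
  have hF : IsCoprime (x.num ^ 3 + Polynomial.C a * x.num * x.denom ^ 2 +
      Polynomial.C b * x.denom ^ 3) x.denom := by
    have h' := (x.isCoprime_num_denom.pow_left (m := 3)).add_mul_right_left
      (Polynomial.C a * x.num * x.denom + Polynomial.C b * x.denom ^ 2)
    rwa [show x.num ^ 3 + (Polynomial.C a * x.num * x.denom + Polynomial.C b * x.denom ^ 2) *
      x.denom = x.num ^ 3 + Polynomial.C a * x.num * x.denom ^ 2 +
        Polynomial.C b * x.denom ^ 3 by ring] at h'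
  have hxy : x.denom ^ 3 ∣ y.denom ^ 2 := by
    refine (hF.symm.pow_left (m := 3)).dvd_of_dvd_mul_left ⟨y.num ^ 2, ?_⟩
    rw [← key, mul_comm]
  have hyx : y.denom ^ 2 ∣ x.denom ^ 3 := by
    refine y.isCoprime_num_denom.symm.pow.dvd_of_dvd_mul_left ⟨_, key.trans (mul_comm _ _)⟩
  exact eq_of_monic_of_associated (y.monic_denom.pow 2) (x.monic_denom.pow 3)
    (associated_of_dvd_dvd hyx hxy)

theorem num_sq_eq_of_sq_eq_cubic {x y : RatFunc K} {a b : K}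
    (h : y ^ 2 = x ^ 3 + algebraMap K (RatFunc K) a * x + algebraMap K (RatFunc K) b) :
    y.num ^ 2 = x.num ^ 3 + Polynomial.C a * x.num * x.denom ^ 2 +
      Polynomial.C b * x.denom ^ 3 := by
  have key := num_sq_mul_denom_pow_three_of_sq_eq_cubic h
  rw [denom_sq_eq_denom_pow_three_of_sq_eq_cubic h] at key
  exact mul_right_cancel₀ (pow_ne_zero 3 x.denom_ne_zero) key

end RatFunc

theorem stmt_14_general (p : ℕ) [Fact p.Prime]
    (K : Type*) [Field K] [Algebra ℚ_[p] K]
    (x y : RatFunc K) (h : y ^ 2 = x ^ 3 - x) :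
    (∃ a : K, x = algebraMap K (RatFunc K) a) ∧
      (∃ b : K, y = algebraMap K (RatFunc K) b) := by
  have : CharZero K := charZero_of_injective_algebraMap (algebraMap ℚ_[p] K).injective
  have hcubic :
      y ^ 2 = x ^ 3 + algebraMap K (RatFunc K) (-1) * x + algebraMap K (RatFunc K) 0 := by
    rw [h, map_neg, map_one, map_zero]
    ring
  have hdenom := RatFunc.denom_sq_eq_denom_pow_three_of_sq_eq_cubic hcubic
  obtain ⟨D, hD⟩ := exists_eq_sq_of_sq_eq_pow_three hdenom
  have hxD : IsCoprime x.num D :=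
    (IsCoprime.pow_right_iff two_pos).mp (hD ▸ x.isCoprime_num_denom)
  obtain ⟨hxnum, hDdeg, hynum⟩ := natDegree_eq_zero_of_sq_eq_mul_sq_sub_pow_four hxD <| by
    rw [RatFunc.num_sq_eq_of_sq_eq_cubic hcubic, hD, map_neg, map_one, map_zero]
    ring
  have hxdenom : x.denom.natDegree = 0 := by rw [hD, natDegree_pow, hDdeg]
  have hydenom : y.denom.natDegree = 0 := by
    have := congrArg natDegree hdenom
    rw [natDegree_pow, natDegree_pow, hxdenom] at this
    omega
  exact ⟨RatFunc.exists_eq_algebraMap_of_natDegree_eq_zero hxnum hxdenom,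
    RatFunc.exists_eq_algebraMap_of_natDegree_eq_zero hynum hydenom⟩

/-- Let `K` be a p-adic field and `x, y ∈ K(t)` with `y² = x³ - x`. Then `x` and `y` are
constants, i.e. lie in the image of `K` in `K(t)`. -/
theorem stmt_14 (p : ℕ) [Fact p.Prime]
    (K : Type*) [Field K] [Algebra ℚ_[p] K] [FiniteDimensional ℚ_[p] K]
    (x y : RatFunc K) (h : y ^ 2 = x ^ 3 - x) :
    (∃ a : K, x = algebraMap K (RatFunc K) a) ∧
      (∃ b : K, y = algebraMap K (RatFunc K) b) :=
  stmt_14_general p K x y h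
end

section
/- Let K be a p-adic field. Then, inside K(t), the set of constants equals the following set: K = { y₁/y₂ : y₁, y₂ ∈ K(t), y₂ ≠ 0, and there exist x₁, x₂ ∈ K(t) with y₁² = x₁³ − x₁ and y₂² = x₂³ − x₂ }. In particular, K is a diophantine subset of K(t). -/
/-!
A point of `y² = x³ - x` over `k(t)` has constant `y`: writing `x = a / b` in lowest terms,
`(y b²)² = a b (a² - b²)` with pairwise coprime factors, so `a`, `b` and `a² - b²` are squares up
to constants, and `a = α u²`, `b = β v²` give a solution of `α² u⁴ - β² v⁴ = γ c²`, which by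
Mason–Stothers (`Polynomial.flt_catalan` with exponents `4, 4, 2`) forces `u`, `v` to be constant.
So every such quotient `y₁ / y₂` lies in `K`.

Conversely, in a complete normed field every `y` of norm at most `1/2` is a `y`-coordinate, since
`x ↦ x³ - y²` is a contraction of the closed ball of radius `1/2`. For `c ∈ K` and `ε ≠ 0` small
enough both `ε` and `c ε` are `y`-coordinates, and `c = (c ε) / ε`. A `p`-adic field is complete for
the spectral norm extending the `p`-adic norm.
-/

open Metric Set

section RationalFunctions

open Polynomial

variable {k : Type*} [Field k]

theorem Polynomial.exists_C_mul_pow_eq_of_isCoprime_of_mul_eq_pow {a b w : k[X]} {n : ℕ}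
    (hab : IsCoprime a b) (h : a * b = w ^ n) : ∃ (α : k) (u : k[X]), α ≠ 0 ∧ C α * u ^ n = a := by
  obtain ⟨u, ε, hε⟩ := exists_associated_pow_of_mul_eq_pow' hab h
  obtain ⟨α, hα, hαε⟩ := Polynomial.isUnit_iff.mp ε.isUnit
  exact ⟨α, u, hα.ne_zero, by rw [hαε, mul_comm, hε]⟩

theorem Polynomial.natDegree_eq_zero_of_sq_eq_mul_mul_sq_sub_sq (h2 : (2 : k) ≠ 0)
    {a b w : k[X]} (hab : IsCoprime a b) (hw : w ≠ 0) (h : w ^ 2 = a * b * (a ^ 2 - b ^ 2)) :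
    a.natDegree = 0 ∧ b.natDegree = 0 ∧ w.natDegree = 0 := by
  have hprod : a * b * (a ^ 2 - b ^ 2) ≠ 0 := h ▸ pow_ne_zero 2 hw
  have had : IsCoprime a (a ^ 2 - b ^ 2) := by
    simpa [sub_eq_neg_add, sq] using hab.pow_right (n := 2) |>.neg_right.add_mul_left_right a
  have hbd : IsCoprime b (a ^ 2 - b ^ 2) := by
    simpa [sub_eq_add_neg, sq] using hab.symm.pow_right (n := 2).add_mul_left_right (-b)
  obtain ⟨α, u, hα, rfl⟩ := exists_C_mul_pow_eq_of_isCoprime_of_mul_eq_pow (hab.mul_right had)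
    (show _ = w ^ 2 by rw [h]; ring)
  obtain ⟨β, v, hβ, rfl⟩ := exists_C_mul_pow_eq_of_isCoprime_of_mul_eq_pow (hab.symm.mul_right hbd)
    (show _ = w ^ 2 by rw [h]; ring)
  obtain ⟨γ, c, hγ, hc⟩ := exists_C_mul_pow_eq_of_isCoprime_of_mul_eq_pow
    (had.symm.mul_right hbd.symm) (show _ = w ^ 2 by rw [h]; ring)
  have huv : IsCoprime u v :=
    (hab.of_isCoprime_of_dvd_left (dvd_mul_of_dvd_right (dvd_pow_self u two_ne_zero) _))
      |>.of_isCoprime_of_dvd_right (dvd_mul_of_dvd_right (dvd_pow_self v two_ne_zero) _)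
  have h4 : ((4 : ℕ) : k) ≠ 0 := by
    rw [show ((4 : ℕ) : k) = 2 * 2 by norm_num]
    exact mul_ne_zero h2 h2
  -- `α² u⁴ - β² v⁴ = γ c²`, and `1/4 + 1/4 + 1/2 ≤ 1`
  obtain ⟨hu0, hv0, -⟩ := flt_catalan (p := 4) (q := 4) (r := 2) (by norm_num) (by norm_num)
    (by norm_num) (by norm_num) h4 h4 (by exact_mod_cast h2)
    (right_ne_zero_of_mul (left_ne_zero_of_mul (left_ne_zero_of_mul hprod))
      |> ne_zero_pow two_ne_zero)
    (right_ne_zero_of_mul (right_ne_zero_of_mul (left_ne_zero_of_mul hprod))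
      |> ne_zero_pow two_ne_zero)
    (right_ne_zero_of_mul (hc ▸ right_ne_zero_of_mul hprod) |> ne_zero_pow two_ne_zero) huv
    (pow_ne_zero 2 hα) (neg_ne_zero.mpr (pow_ne_zero 2 hβ)) (neg_ne_zero.mpr hγ)
    (u := α ^ 2) (v := -β ^ 2) (w := -γ) (by
      simp only [map_neg, map_pow]
      linear_combination -hc)
  have ha0 : (C α * u ^ 2).natDegree = 0 := by rw [natDegree_C_mul hα, natDegree_pow, hu0]
  have hb0 : (C β * v ^ 2).natDegree = 0 := by rw [natDegree_C_mul hβ, natDegree_pow, hv0]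
  refine ⟨ha0, hb0, ?_⟩
  obtain ⟨a₀, ha₀⟩ := natDegree_eq_zero.mp ha0
  obtain ⟨b₀, hb₀⟩ := natDegree_eq_zero.mp hb0
  have hw2 : (w ^ 2).natDegree = 0 := by
    rw [h, ← ha₀, ← hb₀, ← C_pow, ← C_pow, ← C_sub, ← C_mul, ← C_mul, natDegree_C]
  rw [natDegree_pow] at hw2
  omega

theorem RatFunc.mem_range_algebraMap_of_sq_eq_cube_sub_self (h2 : (2 : k) ≠ 0)
    {x y : RatFunc k} (h : y ^ 2 = x ^ 3 - x) : y ∈ range (algebraMap k (RatFunc k)) := by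
  rcases eq_or_ne y 0 with rfl | hy
  · exact ⟨0, map_zero _⟩
  set φ := algebraMap k[X] (RatFunc k)
  obtain ⟨a, b, hb, hab, rfl⟩ : ∃ a b : k[X], b ≠ 0 ∧ IsCoprime a b ∧ x = φ a / φ b :=
    ⟨x.num, x.denom, x.denom_ne_zero, x.isCoprime_num_denom, x.num_div_denom.symm⟩
  have hφb : φ b ≠ 0 := RatFunc.algebraMap_ne_zero hb
  have hsq : (y * φ b ^ 2) ^ 2 = φ (a * b * (a ^ 2 - b ^ 2)) := by
    rw [mul_pow, h]
    simp only [map_mul, map_sub, map_pow]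
    field_simp
  obtain ⟨w, hw⟩ := IsIntegrallyClosed.exists_algebraMap_eq_of_isIntegral_pow two_pos
    (hsq ▸ isIntegral_algebraMap)
  have hw0 : w ≠ 0 := by
    rintro rfl
    exact mul_ne_zero hy (pow_ne_zero 2 hφb) (by rw [← hw, map_zero])
  have hwsq : w ^ 2 = a * b * (a ^ 2 - b ^ 2) :=
    RatFunc.algebraMap_injective k (by rw [map_pow, hw, hsq])
  obtain ⟨-, hb0, hw0⟩ := natDegree_eq_zero_of_sq_eq_mul_mul_sq_sub_sq h2 hab hw0 hwsq
  obtain ⟨b₀, rfl⟩ := natDegree_eq_zero.mp hb0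
  obtain ⟨w₀, rfl⟩ := natDegree_eq_zero.mp hw0
  have hC (r : k) :
      algebraMap k[X] (RatFunc k) (Polynomial.C r) = algebraMap k (RatFunc k) r := by
    rw [RatFunc.algebraMap_C, RatFunc.algebraMap_eq_C]
  simp only [φ, hC] at hw hφb
  refine ⟨w₀ / b₀ ^ 2, ?_⟩
  rw [map_div₀, map_pow, div_eq_iff (pow_ne_zero 2 hφb), hw]

end RationalFunctions

theorem exists_sq_eq_cube_sub_self_of_norm_le {R : Type*} [NormedCommRing R] [CompleteSpace R]
    {y : R} (hy : ‖y‖ ≤ 1 / 2) : ∃ x : R, y ^ 2 = x ^ 3 - x := by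
  set f : R → R := fun x => x ^ 3 - y ^ 2
  set s : Set R := closedBall 0 (1 / 2)
  have hmaps : MapsTo f s s := by
    intro x hx
    rw [mem_closedBall_zero_iff] at hx ⊢
    have hx3 : ‖x‖ ^ 3 ≤ (1 / 2) ^ 3 := by gcongr
    have hy2 : ‖y‖ ^ 2 ≤ (1 / 2) ^ 2 := by gcongr
    linarith [norm_sub_le (x ^ 3) (y ^ 2), norm_pow_le' x (n := 3) (by norm_num),
      norm_pow_le' y (n := 2) (by norm_num)]
  have hlip : LipschitzOnWith (Real.toNNReal (3 / 4)) f s := by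
    refine LipschitzOnWith.of_dist_le' fun x hx x' hx' => ?_
    rw [mem_closedBall_zero_iff] at hx hx'
    rw [dist_eq_norm, dist_eq_norm,
      show f x - f x' = (x - x') * (x ^ 2 + x * x' + x' ^ 2) by ring, mul_comm]
    refine (norm_mul_le _ _).trans (mul_le_mul_of_nonneg_right ?_ (norm_nonneg _))
    calc ‖x ^ 2 + x * x' + x' ^ 2‖ ≤ ‖x‖ ^ 2 + ‖x‖ * ‖x'‖ + ‖x'‖ ^ 2 := by
          refine norm_add₃_le.trans ?_
          gcongr
          exacts [norm_pow_le' x two_pos, norm_mul_le x x', norm_pow_le' x' two_pos]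
      _ ≤ 3 / 4 := by nlinarith [norm_nonneg x, norm_nonneg x']
  have hcontr : ContractingWith (Real.toNNReal (3 / 4)) (hmaps.restrict f s s) :=
    ⟨by rw [Real.toNNReal_lt_one]; norm_num, hlip.mapsToRestrict hmaps⟩
  obtain ⟨x, -, hfix, -⟩ := hcontr.exists_fixedPoint' isClosed_closedBall.isComplete hmaps
    (mem_closedBall_self (by norm_num)) (edist_ne_top _ _)
  have hx : x ^ 3 - y ^ 2 = x := hfix
  exact ⟨x, by linear_combination -hx⟩

theorem exists_eq_div_of_sq_eq_cube_sub_self {F : Type*} [NontriviallyNormedField F]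
    [CompleteSpace F] (c : F) :
    ∃ y₁ y₂ x₁ x₂ : F, y₂ ≠ 0 ∧ y₁ ^ 2 = x₁ ^ 3 - x₁ ∧ y₂ ^ 2 = x₂ ^ 3 - x₂ ∧ c = y₁ / y₂ := by
  have hc : 0 < 2 * (‖c‖ + 1) := by positivity
  obtain ⟨ε, hε0, hε⟩ := NormedField.exists_norm_lt F (one_div_pos.mpr hc)
  have hεc : ‖ε‖ * (2 * (‖c‖ + 1)) < 1 := (lt_div_iff₀ hc).mp hε
  obtain ⟨x₁, hx₁⟩ := exists_sq_eq_cube_sub_self_of_norm_le (y := c * ε)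
    (by rw [norm_mul]; nlinarith [norm_nonneg c])
  obtain ⟨x₂, hx₂⟩ := exists_sq_eq_cube_sub_self_of_norm_le (y := ε) (by nlinarith [norm_nonneg c])
  have hε0' : ε ≠ 0 := norm_pos_iff.mp hε0
  exact ⟨c * ε, ε, x₁, x₂, hε0', hx₁, hx₂, by rw [mul_div_cancel_right₀ _ hε0']⟩

/-- Proposition `csts-dioph`: let `K` be a p-adic field. Inside `K(t)`, the set of constants
(the image of `K`) equals the set of quotients `y₁/y₂` with `y₂ ≠ 0` where `y₁, y₂` are
`y`-coordinates of points of the elliptic curve `y² = x³ - x` over `K(t)`. In particular,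
`K` is a diophantine subset of `K(t)`. -/
theorem stmt_15 (p : ℕ) [Fact p.Prime]
    (K : Type*) [Field K] [Algebra ℚ_[p] K] [FiniteDimensional ℚ_[p] K] :
    Set.range (algebraMap K (RatFunc K)) =
      {z : RatFunc K | ∃ y₁ y₂ x₁ x₂ : RatFunc K,
        y₂ ≠ 0 ∧ y₁ ^ 2 = x₁ ^ 3 - x₁ ∧ y₂ ^ 2 = x₂ ^ 3 - x₂ ∧ z = y₁ / y₂} := by
  have h2 : (2 : K) ≠ 0 := by
    have := (algebraMap ℚ_[p] K).injective.ne (two_ne_zero (α := ℚ_[p]))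
    rwa [map_ofNat, map_zero] at this
  ext z
  constructor
  · rintro ⟨c, rfl⟩
    let := spectralNorm.nontriviallyNormedField ℚ_[p] K
    obtain ⟨y₁, y₂, x₁, x₂, hy₂, h₁, h₂, hc⟩ := exists_eq_div_of_sq_eq_cube_sub_self c
    set ι := algebraMap K (RatFunc K)
    refine ⟨ι y₁, ι y₂, ι x₁, ι x₂, (map_ne_zero ι).mpr hy₂, ?_, ?_, by rw [hc, map_div₀]⟩ <;>
      simp only [← map_pow, ← map_sub, h₁, h₂]
  · rintro ⟨y₁, y₂, x₁, x₂, -, h₁, h₂, rfl⟩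
    obtain ⟨c₁, hc₁⟩ := RatFunc.mem_range_algebraMap_of_sq_eq_cube_sub_self h2 h₁
    obtain ⟨c₂, hc₂⟩ := RatFunc.mem_range_algebraMap_of_sq_eq_cube_sub_self h2 h₂
    exact ⟨c₁ / c₂, by rw [map_div₀, hc₁, hc₂]⟩
end
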